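/- arXiv:1711.11405 — 3 statements merged into one kernel-verified Lean document; each statement's English description precedes it below -/
import Mathlib

section
/- Conditional expected one-step contraction of randomized Kaczmarz: if x* solves Ax = b, x ∈ X (the column span of A^H) with x − x* ∈ X, and the next row index R is chosen with probabilities p_i = ||a_i||^2/||A||_F^2, then E_R ||x' − x*||^2 ≤ (1 − κ_X(A)) ||x − x*||^2, where x' is the Kaczmarz update using row R. -/
/-!
With `e = x - x*`, the identity `aᵢᴴ x* = bᵢ` turns the Kaczmarz step into the same step for
the homogeneous system applied to `e`: `e` minus its orthogonal projection onto `star aᵢ`. By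
Pythagoras the squared error drops to `‖e‖² - |aᵢᴴ e|² / ‖aᵢ‖²`, and averaging with weights
`‖aᵢ‖² / ‖A‖_F²` gives `‖e‖² - ‖A e‖² / ‖A‖_F²`, which is at most `(1 - κ) ‖e‖²` because
`e ∈ X`.
-/

open Matrix

variable {m n : Type*} [Fintype n]

noncomputable def kaczmarzStep (A : Matrix m n ℂ) (b : m → ℂ) (x : n → ℂ) (i : m) : n → ℂ :=
  x + ((b i - (A *ᵥ x) i) / ((∑ j, Complex.normSq (A i j) : ℝ) : ℂ)) • star (A i)

lemma kaczmarzStep_sub_of_mulVec_eq {A : Matrix m n ℂ} {b : m → ℂ} {xs : n → ℂ}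
    (hxs : A *ᵥ xs = b) (x : n → ℂ) (i : m) :
    kaczmarzStep A b x i - xs = kaczmarzStep A 0 (x - xs) i := by
  simp only [kaczmarzStep, mulVec_sub, hxs, Pi.sub_apply, Pi.zero_apply, zero_sub, neg_sub]
  abel

lemma sum_normSq_pos {v : n → ℂ} (hv : v ≠ 0) : 0 < ∑ j, Complex.normSq (v j) := by
  obtain ⟨j, hj⟩ := Function.ne_iff.mp hv
  exact Finset.sum_pos' (fun j _ => Complex.normSq_nonneg _)
    ⟨j, Finset.mem_univ j, Complex.normSq_pos.mpr hj⟩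

lemma sum_normSq_sub_mul_star (e a : n → ℂ) (d : ℂ) :
    ∑ k, Complex.normSq (e k - d * star (a k)) =
      ∑ k, Complex.normSq (e k) - 2 * (starRingEnd ℂ d * (a ⬝ᵥ e)).re
        + Complex.normSq d * ∑ k, Complex.normSq (a k) := by
  simp only [dotProduct, Finset.mul_sum, Complex.re_sum]
  rw [← Finset.sum_sub_distrib, ← Finset.sum_add_distrib]
  refine Finset.sum_congr rfl fun k _ => ?_
  rw [Complex.star_def, Complex.normSq_sub, Complex.normSq_mul, Complex.normSq_conj, map_mul,
    Complex.conj_conj, mul_left_comm (e k), mul_comm (e k)]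
  ring

/-- The factor `‖aᵢ‖²` makes this hold for a zero row too, where the step divides by zero. -/
lemma mul_sum_normSq_kaczmarzStep_zero (A : Matrix m n ℂ) (e : n → ℂ) (i : m) :
    (∑ j, Complex.normSq (A i j)) * ∑ k, Complex.normSq (kaczmarzStep A 0 e i k) =
      (∑ j, Complex.normSq (A i j)) * ∑ k, Complex.normSq (e k)
        - Complex.normSq ((A *ᵥ e) i) := by
  set N := ∑ j, Complex.normSq (A i j) with hN_def
  by_cases hrow : A i = 0
  · have hN_zero : N = 0 := by simp [N, hrow]
    simp [hN_zero, mulVec, hrow]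
  have hN : 0 < N := sum_normSq_pos hrow
  have hstep : ∀ k, kaczmarzStep A 0 e i k = e k - ((A *ᵥ e) i / N) * star (A i k) := by
    intro k
    simp only [kaczmarzStep, Pi.add_apply, Pi.smul_apply, Pi.star_apply, Pi.zero_apply,
      smul_eq_mul, N]
    ring
  have hrow_dot : A i ⬝ᵥ e = (A *ᵥ e) i := rfl
  simp only [hstep, sum_normSq_sub_mul_star, hrow_dot, map_div₀, Complex.conj_ofReal,
    Complex.normSq_ofReal, ← hN_def]
  rw [div_mul_eq_mul_div, mul_comm (starRingEnd ℂ _), Complex.mul_conj, ← Complex.ofReal_div,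
    Complex.ofReal_re]
  field_simp
  ring

lemma sum_rowProb_mul_sum_normSq_kaczmarzStep_zero [Fintype m] (A : Matrix m n ℂ)
    (e : n → ℂ) :
    ∑ i, (∑ j, Complex.normSq (A i j)) / (∑ i, ∑ j, Complex.normSq (A i j))
        * ∑ k, Complex.normSq (kaczmarzStep A 0 e i k) =
      ((∑ i, ∑ j, Complex.normSq (A i j)) * ∑ k, Complex.normSq (e k)
        - ∑ i, Complex.normSq ((A *ᵥ e) i)) / ∑ i, ∑ j, Complex.normSq (A i j) := by
  simp_rw [div_mul_eq_mul_div, mul_sum_normSq_kaczmarzStep_zero]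
  rw [← Finset.sum_div, Finset.sum_sub_distrib, Finset.sum_mul]

lemma sInf_quotient_mul_le [Fintype m] (A : Matrix m n ℂ) (X : Set (n → ℂ)) {c : ℝ}
    (hc : 0 ≤ c) {y : n → ℂ} (hy : y ∈ X) :
    sInf {r : ℝ | ∃ y ∈ X, y ≠ 0 ∧
        r = (∑ i, Complex.normSq ((A *ᵥ y) i)) / (c * ∑ j, Complex.normSq (y j))}
        * ∑ j, Complex.normSq (y j) ≤
      (∑ i, Complex.normSq ((A *ᵥ y) i)) / c := by
  by_cases hy0 : y = 0
  · simp [hy0]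
  rw [← le_div_iff₀ (sum_normSq_pos hy0), div_div]
  refine csInf_le ⟨0, ?_⟩ ⟨y, hy, hy0, rfl⟩
  rintro r ⟨v, -, -, rfl⟩
  exact div_nonneg (Finset.sum_nonneg fun i _ => Complex.normSq_nonneg _)
    (mul_nonneg hc (Finset.sum_nonneg fun j _ => Complex.normSq_nonneg _))

theorem kaczmarz_expected_one_step_contraction_general {m n : ℕ}
    (A : Matrix (Fin m) (Fin n) ℂ)
    (b : Fin m → ℂ) (xs x : Fin n → ℂ)
    (hxs : A.mulVec xs = b) (hx : x - xs ∈ Set.range Aᴴ.mulVec) :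
    let F2 : ℝ := ∑ i, ∑ j, Complex.normSq (A i j)
    let p : Fin m → ℝ := fun i => (∑ j, Complex.normSq (A i j)) / F2
    let κ : ℝ := sInf {r : ℝ | ∃ y ∈ Set.range Aᴴ.mulVec, y ≠ 0 ∧
      r = (∑ i, Complex.normSq (A.mulVec y i)) / (F2 * ∑ j, Complex.normSq (y j))}
    let step : Fin m → (Fin n → ℂ) := fun i =>
      x + ((b i - A.mulVec x i) / ((∑ j, Complex.normSq (A i j) : ℝ) : ℂ)) • star (A i)
    ∑ i, p i * (∑ k, Complex.normSq ((step i - xs) k))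
      ≤ (1 - κ) * ∑ k, Complex.normSq ((x - xs) k) := by
  intro F2 p κ step
  set E := ∑ k, Complex.normSq ((x - xs) k)
  set S := ∑ i, Complex.normSq ((A *ᵥ (x - xs)) i)
  have hF2 : 0 ≤ F2 := Finset.sum_nonneg fun i _ => Finset.sum_nonneg fun j _ =>
    Complex.normSq_nonneg _
  have hE : 0 ≤ E := Finset.sum_nonneg fun k _ => Complex.normSq_nonneg _
  have hκ : κ * E ≤ S / F2 := sInf_quotient_mul_le A _ hF2 hx
  have hexpect : ∑ i, p i * ∑ k, Complex.normSq ((step i - xs) k) = (F2 * E - S) / F2 := by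
    have herror : ∀ i, step i - xs = kaczmarzStep A 0 (x - xs) i :=
      kaczmarzStep_sub_of_mulVec_eq hxs x
    simp only [p, herror]
    exact sum_rowProb_mul_sum_normSq_kaczmarzStep_zero A (x - xs)
  rw [hexpect]
  rcases hF2.eq_or_lt with hzero | hpos
  · rw [← hzero, div_zero] at hκ ⊢
    linarith
  · rw [sub_div, mul_div_cancel_left₀ _ hpos.ne']
    linarith

/-- Conditional expected one-step contraction of randomized Kaczmarz:
if `x*` solves `Ax = b`, `x − x* ∈ X = range(Aᴴ)`, and the next row index `R` is
chosen with probabilities `pᵢ = ‖aᵢ‖²/‖A‖_F²`, then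
`E_R ‖x' − x*‖² ≤ (1 − κ_X(A)) ‖x − x*‖²` where `x'` is the Kaczmarz update using row `R`. -/
theorem kaczmarz_expected_one_step_contraction {m n : ℕ}
    (A : Matrix (Fin m) (Fin n) ℂ) (hA : ∀ i, A i ≠ 0)
    (b : Fin m → ℂ) (xs x : Fin n → ℂ)
    (hxs : A.mulVec xs = b) (hx : x - xs ∈ Set.range Aᴴ.mulVec) :
    let F2 : ℝ := ∑ i, ∑ j, Complex.normSq (A i j)
    let p : Fin m → ℝ := fun i => (∑ j, Complex.normSq (A i j)) / F2
    let κ : ℝ := sInf {r : ℝ | ∃ y ∈ Set.range Aᴴ.mulVec, y ≠ 0 ∧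
      r = (∑ i, Complex.normSq (A.mulVec y i)) / (F2 * ∑ j, Complex.normSq (y j))}
    let step : Fin m → (Fin n → ℂ) := fun i =>
      x + ((b i - A.mulVec x i) / ((∑ j, Complex.normSq (A i j) : ℝ) : ℂ)) • star (A i)
    ∑ i, p i * (∑ k, Complex.normSq ((step i - xs) k))
      ≤ (1 - κ) * ∑ k, Complex.normSq ((x - xs) k) :=
  kaczmarz_expected_one_step_contraction_general A b xs x hxs hx
end

section
/- Randomized Kaczmarz expected error bound (Theorem 1): if Ax = b has a solution x* in X = range(A^H), the initialization x^0 lies in X, and the randomized Kaczmarz algorithm with row probabilities p_i = ||a_i||^2/||A||_F^2 produces iterates x^t, then E ||x^t − x*||^2 ≤ (1 − κ_X(A))^t ||x^0 − x*||^2. -/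
open Matrix

/-- One Kaczmarz step for the equation indexed by row `i` of `A`
(here `aᵢ = star (A i)` is the conjugate of the `i`-th row, so that
`⟨aᵢ, x⟩ = (A.mulVec x) i`). -/
noncomputable def kacStep {m n : ℕ} (A : Matrix (Fin m) (Fin n) ℂ) (b : Fin m → ℂ)
    (x : Fin n → ℂ) (i : Fin m) : Fin n → ℂ :=
  x + ((b i - A.mulVec x i) / ((∑ j, Complex.normSq (A i j) : ℝ) : ℂ)) • star (A i)

/-- Kaczmarz iterates: starting point `x0`, rows selected according to the list `l`. -/
noncomputable def kacIter {m n : ℕ} (A : Matrix (Fin m) (Fin n) ℂ) (b : Fin m → ℂ)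
    (x0 : Fin n → ℂ) : List (Fin m) → (Fin n → ℂ)
  | [] => x0
  | i :: l => kacStep A b (kacIter A b x0 l) i

/-!
Each Kaczmarz step replaces the error `e = x - x*` by its orthogonal projection onto the
hyperplane `aᵢ^⊥`, so `‖e'‖² = ‖e‖² - |⟪aᵢ, e⟫|² / ‖aᵢ‖²`. Averaging over rows drawn with
probability `‖aᵢ‖² / ‖A‖_F²` gives `E‖e'‖² = ‖e‖² - ‖A e‖² / ‖A‖_F²`, and since the error stays in
`X = range Aᴴ`, the definition of `κ_X(A)` bounds this by `(1 - κ_X(A)) ‖e‖²`. The bound for `t`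
independent steps follows by conditioning on the first `t - 1` of them.
-/

open WithLp
open scoped InnerProductSpace

section InnerProductSpace

variable {𝕜 E : Type*} [RCLike 𝕜] [NormedAddCommGroup E] [InnerProductSpace 𝕜 E]

theorem norm_sub_inner_div_smul_sq (a e : E) :
    ‖e - (⟪a, e⟫_𝕜 / ((‖a‖ ^ 2 : ℝ) : 𝕜)) • a‖ ^ 2 = ‖e‖ ^ 2 - ‖⟪a, e⟫_𝕜‖ ^ 2 / ‖a‖ ^ 2 := by
  rcases eq_or_ne a 0 with rfl | ha
  · simp
  have ha2 : ‖a‖ ^ 2 ≠ 0 := by positivity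
  have hre : RCLike.re ⟪e, (⟪a, e⟫_𝕜 / ((‖a‖ ^ 2 : ℝ) : 𝕜)) • a⟫_𝕜 = ‖⟪a, e⟫_𝕜‖ ^ 2 / ‖a‖ ^ 2 := by
    rw [inner_smul_right, ← inner_conj_symm, div_mul_eq_mul_div, RCLike.conj_mul]
    norm_cast
    rw [RCLike.norm_conj]
  rw [@norm_sub_sq 𝕜, hre, norm_smul, mul_pow, norm_div, div_pow, RCLike.norm_ofReal, abs_pow,
    abs_norm]
  field_simp
  ring

end InnerProductSpace

theorem sum_prod_mul_foldr_le {ι α : Type*} [Fintype ι] {p : ι → ℝ} (hp : ∀ i, 0 ≤ p i)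
    {T : ι → α → α} {V : α → ℝ} {S : Set α} {c : ℝ} (hc : 0 ≤ c)
    (hT : ∀ i, Set.MapsTo (T i) S S) (hV : ∀ x ∈ S, ∑ i, p i * V (T i x) ≤ c * V x)
    {x₀ : α} (hx₀ : x₀ ∈ S) (t : ℕ) :
    ∑ r : Fin t → ι, (∏ k, p (r k)) * V ((List.ofFn r).foldr T x₀) ≤ c ^ t * V x₀ := by
  have hfoldr_mem : ∀ l : List ι, l.foldr T x₀ ∈ S := fun l => by
    induction l with
    | nil => exact hx₀
    | cons i l ih => exact hT i ih
  induction t with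
  | zero => simp
  | succ t ih =>
    rw [← (Fin.consEquiv fun _ => ι).sum_comp, Fintype.sum_prod_type, Finset.sum_comm]
    calc ∑ r : Fin t → ι, ∑ i, (∏ k, p (Fin.cons i r k)) *
          V ((List.ofFn (Fin.cons i r : Fin (t + 1) → ι)).foldr T x₀)
        = ∑ r : Fin t → ι, (∏ k, p (r k)) * ∑ i, p i * V (T i ((List.ofFn r).foldr T x₀)) := by
          simp [Fin.prod_univ_succ, List.ofFn_succ, Finset.mul_sum, mul_assoc, mul_left_comm]
      _ ≤ ∑ r : Fin t → ι, (∏ k, p (r k)) * (c * V ((List.ofFn r).foldr T x₀)) := by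
          gcongr with r
          · exact Finset.prod_nonneg fun k _ => hp _
          · exact hV _ (hfoldr_mem _)
      _ = c * ∑ r : Fin t → ι, (∏ k, p (r k)) * V ((List.ofFn r).foldr T x₀) := by
          rw [Finset.mul_sum]
          congr! 1 with r
          ring
      _ ≤ c ^ (t + 1) * V x₀ := by
          rw [pow_succ', mul_assoc]
          exact mul_le_mul_of_nonneg_left ih hc

section Euclidean

variable {ι ι' : Type*} [Fintype ι']

theorem sum_normSq_eq_norm_toLp_sq (v : ι' → ℂ) :
    ∑ j, Complex.normSq (v j) = ‖toLp 2 v‖ ^ 2 := by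
  simp [EuclideanSpace.norm_sq_eq, Complex.normSq_eq_norm_sq]

theorem norm_toLp_star_sq (v : ι' → ℂ) :
    ‖toLp 2 (star v)‖ ^ 2 = ∑ j, Complex.normSq (v j) := by
  simp [← sum_normSq_eq_norm_toLp_sq, Complex.normSq_conj]

theorem mulVec_apply_eq_inner_toLp (A : Matrix ι ι' ℂ) (v : ι' → ℂ) (i : ι) :
    (A *ᵥ v) i = ⟪toLp 2 (star (A i)), toLp 2 v⟫_ℂ := by
  rw [EuclideanSpace.inner_toLp_toLp, star_star, dotProduct_comm]
  rfl

theorem normSq_mulVec_apply_le (A : Matrix ι ι' ℂ) (y : ι' → ℂ) (i : ι) :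
    Complex.normSq ((A *ᵥ y) i) ≤ (∑ j, Complex.normSq (A i j)) * ∑ j, Complex.normSq (y j) := by
  rw [← norm_toLp_star_sq, sum_normSq_eq_norm_toLp_sq, mulVec_apply_eq_inner_toLp,
    Complex.normSq_eq_norm_sq, ← mul_pow]
  gcongr
  exact norm_inner_le_norm _ _

theorem sum_normSq_mulVec_le [Fintype ι] (A : Matrix ι ι' ℂ) (y : ι' → ℂ) :
    ∑ i, Complex.normSq ((A *ᵥ y) i) ≤
      (∑ i, ∑ j, Complex.normSq (A i j)) * ∑ j, Complex.normSq (y j) := by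
  rw [Finset.sum_mul]
  exact Finset.sum_le_sum fun i _ => normSq_mulVec_apply_le A y i

end Euclidean

section Kappa

variable {ι ι' : Type*} [Fintype ι] [Fintype ι'] (A : Matrix ι ι' ℂ)

noncomputable def kappaX : ℝ :=
  sInf {r : ℝ | ∃ y ∈ Set.range Aᴴ.mulVec, y ≠ 0 ∧
    r = (∑ i, Complex.normSq (A.mulVec y i)) /
      ((∑ i, ∑ j, Complex.normSq (A i j)) * ∑ j, Complex.normSq (y j))}

theorem kappaX_le_div {y : ι' → ℂ} (hy : y ∈ Set.range Aᴴ.mulVec) (hy0 : y ≠ 0) :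
    kappaX A ≤ (∑ i, Complex.normSq ((A *ᵥ y) i)) /
      ((∑ i, ∑ j, Complex.normSq (A i j)) * ∑ j, Complex.normSq (y j)) :=
  csInf_le ⟨0, by rintro _ ⟨y, -, -, rfl⟩; simp only [Complex.normSq_eq_norm_sq]; positivity⟩
    ⟨y, hy, hy0, rfl⟩

theorem kappaX_mul_le {y : ι' → ℂ} (hy : y ∈ Set.range Aᴴ.mulVec) :
    kappaX A * ((∑ i, ∑ j, Complex.normSq (A i j)) * ∑ j, Complex.normSq (y j)) ≤
      ∑ i, Complex.normSq ((A *ᵥ y) i) := by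
  rcases eq_or_ne y 0 with rfl | hy0
  · simp
  have hden : 0 ≤ (∑ i, ∑ j, Complex.normSq (A i j)) * ∑ j, Complex.normSq (y j) := by
    simp only [Complex.normSq_eq_norm_sq]
    positivity
  rcases hden.eq_or_lt with h | h
  · rw [← h, mul_zero]
    simp only [Complex.normSq_eq_norm_sq]
    positivity
  · rw [← le_div_iff₀ h]
    exact kappaX_le_div A hy hy0

/-- When `range Aᴴ = {0}` the set defining `kappaX A` is empty, and `sInf ∅ = 0` in `ℝ`. -/
theorem kappaX_le_one : kappaX A ≤ 1 := by
  by_cases hX : ∃ y ∈ Set.range Aᴴ.mulVec, y ≠ 0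
  · obtain ⟨y, hy, hy0⟩ := hX
    refine (kappaX_le_div A hy hy0).trans (div_le_one_of_le₀ (sum_normSq_mulVec_le A y) ?_)
    simp only [Complex.normSq_eq_norm_sq]
    positivity
  · have hempty : kappaX A = sInf ∅ := by
      rw [kappaX]
      congr 1
      ext r
      exact iff_of_false (fun ⟨y, hy, hy0, _⟩ => hX ⟨y, hy, hy0⟩) id
    rw [hempty, Real.sInf_empty]
    exact zero_le_one

end Kappa

theorem star_row_mem_range_conjTranspose {ι ι' : Type*} [Fintype ι] (A : Matrix ι ι' ℂ) (i : ι) :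
    star (A i) ∈ Set.range Aᴴ.mulVec := by
  classical
  exact ⟨Pi.single i 1, by ext j; simp⟩

section Kaczmarz

variable {m n : ℕ} {A : Matrix (Fin m) (Fin n) ℂ} {b : Fin m → ℂ} {xs : Fin n → ℂ}

theorem kacIter_eq_foldr (x₀ : Fin n → ℂ) (l : List (Fin m)) :
    kacIter A b x₀ l = l.foldr (fun i x => kacStep A b x i) x₀ := by
  induction l with
  | nil => rfl
  | cons i l ih => rw [kacIter, ih, List.foldr_cons]

theorem kacStep_mem_range {x : Fin n → ℂ} (hx : x ∈ Set.range Aᴴ.mulVec) (i : Fin m) :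
    kacStep A b x i ∈ Set.range Aᴴ.mulVec :=
  (LinearMap.range Aᴴ.mulVecLin).add_mem hx
    (Submodule.smul_mem _ _ (star_row_mem_range_conjTranspose A i))

theorem toLp_kacStep_sub (hxs : A *ᵥ xs = b) (x : Fin n → ℂ) (i : Fin m) :
    toLp 2 (kacStep A b x i - xs) = toLp 2 (x - xs) -
      (⟪toLp 2 (star (A i)), toLp 2 (x - xs)⟫_ℂ /
        ((‖toLp 2 (star (A i))‖ ^ 2 : ℝ) : ℂ)) • toLp 2 (star (A i)) := by
  rw [← mulVec_apply_eq_inner_toLp, norm_toLp_star_sq, ← hxs, mulVec_sub, kacStep]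
  ext j
  simp only [PiLp.sub_apply, PiLp.smul_apply, Pi.add_apply, Pi.sub_apply, Pi.smul_apply,
    smul_eq_mul]
  ring

theorem sum_normSq_kacStep_sub (hxs : A *ᵥ xs = b) (x : Fin n → ℂ) (i : Fin m) :
    ∑ j, Complex.normSq ((kacStep A b x i - xs) j) = ∑ j, Complex.normSq ((x - xs) j) -
      Complex.normSq ((A *ᵥ (x - xs)) i) / ∑ j, Complex.normSq (A i j) := by
  rw [sum_normSq_eq_norm_toLp_sq, toLp_kacStep_sub hxs]
  refine (norm_sub_inner_div_smul_sq _ _).trans ?_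
  rw [← mulVec_apply_eq_inner_toLp, norm_toLp_star_sq, Complex.normSq_eq_norm_sq,
    ← sum_normSq_eq_norm_toLp_sq]

theorem sum_rowWeight_mul_kacStep_sub_le (hxs : A *ᵥ xs = b) {x : Fin n → ℂ}
    (hx : x - xs ∈ Set.range Aᴴ.mulVec) :
    ∑ i, (∑ j, Complex.normSq (A i j)) / (∑ i, ∑ j, Complex.normSq (A i j)) *
        ∑ j, Complex.normSq ((kacStep A b x i - xs) j) ≤
      (1 - kappaX A) * ∑ j, Complex.normSq ((x - xs) j) := by
  set F2 := ∑ i, ∑ j, Complex.normSq (A i j)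
  set E := ∑ j, Complex.normSq ((x - xs) j)
  have hterm : ∀ i, (∑ j, Complex.normSq (A i j)) / F2 *
      ∑ j, Complex.normSq ((kacStep A b x i - xs) j) =
        ((∑ j, Complex.normSq (A i j)) * E - Complex.normSq ((A *ᵥ (x - xs)) i)) / F2 := by
    intro i
    rw [sum_normSq_kacStep_sub hxs, div_mul_eq_mul_div, mul_sub, mul_div_cancel_of_imp']
    -- a zero row has zero residual, so its `0 / 0` term is harmless
    intro hrow
    have hq := normSq_mulVec_apply_le A (x - xs) i
    rw [hrow, zero_mul] at hq
    exact le_antisymm hq (Complex.normSq_nonneg _)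
  rw [Finset.sum_congr rfl fun i _ => hterm i, ← Finset.sum_div, Finset.sum_sub_distrib,
    ← Finset.sum_mul]
  have hF2 : 0 ≤ F2 := by
    simp only [F2, Complex.normSq_eq_norm_sq]
    positivity
  rcases hF2.eq_or_lt with h | h
  · rw [← h, div_zero]
    refine mul_nonneg (sub_nonneg.2 (kappaX_le_one A)) ?_
    simp only [E, Complex.normSq_eq_norm_sq]
    positivity
  · rw [div_le_iff₀ h]
    linarith [kappaX_mul_le A hx]

end Kaczmarz

theorem randomized_kaczmarz_expected_error_bound_general {m n : ℕ}
    (A : Matrix (Fin m) (Fin n) ℂ)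
    (b : Fin m → ℂ) (xs x0 : Fin n → ℂ)
    (hxs : A.mulVec xs = b) (hxsX : xs ∈ Set.range Aᴴ.mulVec)
    (hx0 : x0 ∈ Set.range Aᴴ.mulVec) (t : ℕ) :
    let F2 : ℝ := ∑ i, ∑ j, Complex.normSq (A i j)
    let p : Fin m → ℝ := fun i => (∑ j, Complex.normSq (A i j)) / F2
    let κ : ℝ := sInf {r : ℝ | ∃ y ∈ Set.range Aᴴ.mulVec, y ≠ 0 ∧
      r = (∑ i, Complex.normSq (A.mulVec y i)) / (F2 * ∑ j, Complex.normSq (y j))}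
    ∑ r : Fin t → Fin m, (∏ k, p (r k)) *
        (∑ j, Complex.normSq ((kacIter A b x0 (List.ofFn r) - xs) j))
      ≤ (1 - κ) ^ t * ∑ j, Complex.normSq ((x0 - xs) j) := by
  intro F2 p κ
  have hp : ∀ i, 0 ≤ p i := fun i => by
    simp only [p, F2, Complex.normSq_eq_norm_sq]
    positivity
  simp only [kacIter_eq_foldr]
  exact sum_prod_mul_foldr_le (V := fun x => ∑ j, Complex.normSq ((x - xs) j)) hp
    (sub_nonneg.2 (kappaX_le_one A)) (fun i x hx => kacStep_mem_range hx i)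
    (fun x hx => sum_rowWeight_mul_kacStep_sub_le hxs
      ((LinearMap.range Aᴴ.mulVecLin).sub_mem hx hxsX)) hx0 t

/-- Randomized Kaczmarz expected error bound (Theorem 1):
if `Ax = b` has a solution `x* ∈ X = range(Aᴴ)`, the initialization `x⁰ ∈ X`,
and randomized Kaczmarz uses row probabilities `pᵢ = ‖aᵢ‖²/‖A‖_F²` (i.i.d. over steps),
then `E‖xᵗ − x*‖² ≤ (1 − κ_X(A))ᵗ ‖x⁰ − x*‖²`. -/
theorem randomized_kaczmarz_expected_error_bound {m n : ℕ}
    (A : Matrix (Fin m) (Fin n) ℂ) (hA : ∀ i, A i ≠ 0)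
    (b : Fin m → ℂ) (xs x0 : Fin n → ℂ)
    (hxs : A.mulVec xs = b) (hxsX : xs ∈ Set.range Aᴴ.mulVec)
    (hx0 : x0 ∈ Set.range Aᴴ.mulVec) (t : ℕ) :
    let F2 : ℝ := ∑ i, ∑ j, Complex.normSq (A i j)
    let p : Fin m → ℝ := fun i => (∑ j, Complex.normSq (A i j)) / F2
    let κ : ℝ := sInf {r : ℝ | ∃ y ∈ Set.range Aᴴ.mulVec, y ≠ 0 ∧
      r = (∑ i, Complex.normSq (A.mulVec y i)) / (F2 * ∑ j, Complex.normSq (y j))}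
    ∑ r : Fin t → Fin m, (∏ k, p (r k)) *
        (∑ j, Complex.normSq ((kacIter A b x0 (List.ofFn r) - xs) j))
      ≤ (1 - κ) ^ t * ∑ j, Complex.normSq ((x0 - xs) j) :=
  randomized_kaczmarz_expected_error_bound_general A b xs x0 hxs hxsX hx0 t
end

section
/- Gain formula for the consistent underdetermined system: for ξ ≥ 0 and B = [Q; √ξ I_K] (with B full column rank), the minimum gain of B^H over the subspace X = range(B) equals κ_X(B^H) = (λ_min(Q^H Q) + ξ)/(||Q||_F^2 + K ξ), where λ_min denotes the smallest eigenvalue. -/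
/-!
Write `x = B v` for the points of `X = range B`, so that `Bᴴ x = (Bᴴ B) v` with
`Bᴴ B = Qᴴ Q + ξ I`. In an orthonormal eigenbasis of `Qᴴ Q` the operator `Bᴴ B` is diagonal with
entries `dᵢ = μᵢ + ξ ≥ 0`, and if `cᵢ` are the coordinates of `v` then
`‖Bᴴ x‖² = ∑ dᵢ² |cᵢ|²` and `‖x‖² = ⟪v, Bᴴ B v⟫ = ∑ dᵢ |cᵢ|²`. Hence the quotient
`‖Bᴴ x‖² / ‖x‖²` is at least `min dᵢ = λ_min(Qᴴ Q) + ξ`, with equality at an eigenvector of the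
least eigenvalue; injectivity of `B` makes that eigenvalue of `Bᴴ B` positive.
-/

open Matrix
open scoped InnerProductSpace

section Eigenbasis

variable {𝕜 E ι : Type*} [RCLike 𝕜] [NormedAddCommGroup E] [InnerProductSpace 𝕜 E] [Fintype ι]
  {S : E →ₗ[𝕜] E} {b : OrthonormalBasis ι 𝕜 E} {d : ι → ℝ}

theorem LinearMap.IsSymmetric.inner_eigenbasis_apply (hS : S.IsSymmetric)
    (hb : ∀ i, S (b i) = (d i : 𝕜) • b i) (x : E) (i : ι) :
    ⟪b i, S x⟫_𝕜 = d i * ⟪b i, x⟫_𝕜 := by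
  rw [← hS, hb i, inner_smul_left, RCLike.conj_ofReal]

theorem LinearMap.IsSymmetric.norm_sq_apply_eq_sum_eigenbasis (hS : S.IsSymmetric)
    (hb : ∀ i, S (b i) = (d i : 𝕜) • b i) (x : E) :
    ‖S x‖ ^ 2 = ∑ i, d i ^ 2 * ‖⟪b i, x⟫_𝕜‖ ^ 2 := by
  simp only [← b.sum_sq_norm_inner_right (S x), hS.inner_eigenbasis_apply hb, norm_mul,
    RCLike.norm_ofReal, mul_pow, sq_abs]

theorem LinearMap.IsSymmetric.re_inner_apply_eq_sum_eigenbasis (hS : S.IsSymmetric)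
    (hb : ∀ i, S (b i) = (d i : 𝕜) • b i) (x : E) :
    RCLike.re ⟪x, S x⟫_𝕜 = ∑ i, d i * ‖⟪b i, x⟫_𝕜‖ ^ 2 := by
  rw [← b.sum_inner_mul_inner x (S x), map_sum]
  refine Finset.sum_congr rfl fun i _ => ?_
  rw [hS.inner_eigenbasis_apply hb, mul_left_comm, ← inner_conj_symm, RCLike.conj_mul,
    ← RCLike.ofReal_pow, ← RCLike.ofReal_mul, RCLike.ofReal_re]

theorem LinearMap.IsSymmetric.mul_re_inner_apply_le_norm_sq (hS : S.IsSymmetric)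
    (hb : ∀ i, S (b i) = (d i : 𝕜) • b i) {c : ℝ} (hc : 0 ≤ c) (hd : ∀ i, c ≤ d i) (x : E) :
    c * RCLike.re ⟪x, S x⟫_𝕜 ≤ ‖S x‖ ^ 2 := by
  rw [hS.re_inner_apply_eq_sum_eigenbasis hb, hS.norm_sq_apply_eq_sum_eigenbasis hb,
    Finset.mul_sum]
  refine Finset.sum_le_sum fun i _ => ?_
  rw [← mul_assoc, sq (d i)]
  exact mul_le_mul_of_nonneg_right (mul_le_mul_of_nonneg_right (hd i) (hc.trans (hd i)))
    (by positivity)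

end Eigenbasis

section Gain

variable {𝕜 E F ι : Type*} [RCLike 𝕜] [NormedAddCommGroup E] [InnerProductSpace 𝕜 E]
  [NormedAddCommGroup F] [InnerProductSpace 𝕜 F] [FiniteDimensional 𝕜 E] [FiniteDimensional 𝕜 F]

/-- The paper's `κ_X(A)` is the least element of this set divided by `‖A‖_F²`. -/
def gainQuotients (A : F →ₗ[𝕜] E) (X : Submodule 𝕜 F) : Set ℝ :=
  {r | ∃ x ∈ X, x ≠ 0 ∧ r = ‖A x‖ ^ 2 / ‖x‖ ^ 2}

theorem LinearMap.norm_sq_apply_eq_re_inner_adjoint_comp_self (T : E →ₗ[𝕜] F) (x : E) :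
    ‖T x‖ ^ 2 = RCLike.re ⟪x, (T.adjoint ∘ₗ T) x⟫_𝕜 := by
  rw [LinearMap.comp_apply, LinearMap.adjoint_inner_right, ← norm_sq_eq_re_inner]

theorem LinearMap.isLeast_gainQuotients_adjoint [Fintype ι] {T : E →ₗ[𝕜] F}
    (hT : Function.Injective T) (b : OrthonormalBasis ι 𝕜 E) {d : ι → ℝ}
    (hb : ∀ i, (T.adjoint ∘ₗ T) (b i) = (d i : 𝕜) • b i) {i₀ : ι} (hi₀ : ∀ i, d i₀ ≤ d i) :
    IsLeast (gainQuotients T.adjoint (LinearMap.range T)) (d i₀) := by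
  have hd : ∀ i, ‖T (b i)‖ ^ 2 = d i := fun i => by
    rw [T.norm_sq_apply_eq_re_inner_adjoint_comp_self, hb, inner_smul_right,
      inner_self_eq_norm_sq_to_K, b.orthonormal.1 i]
    simp
  have hTb : T (b i₀) ≠ 0 := (map_ne_zero_iff T hT).mpr (b.orthonormal.ne_zero i₀)
  have hpos : 0 < d i₀ := hd i₀ ▸ by positivity
  refine ⟨⟨T (b i₀), LinearMap.mem_range_self T _, hTb, ?_⟩, ?_⟩
  · rw [← LinearMap.comp_apply, hb, norm_smul, b.orthonormal.1 i₀, hd, RCLike.norm_ofReal,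
      abs_of_pos hpos]
    field_simp
  · rintro r ⟨_, ⟨x, rfl⟩, hx, rfl⟩
    rw [le_div_iff₀ (by positivity), T.norm_sq_apply_eq_re_inner_adjoint_comp_self]
    exact T.isSymmetric_adjoint_comp_self.mul_re_inner_apply_le_norm_sq hb hpos.le hi₀ x

end Gain

theorem Matrix.conjTranspose_fromRows_mul_self {m₁ m₂ n R : Type*} [Fintype m₁] [Fintype m₂]
    [Semiring R] [StarRing R] (A₁ : Matrix m₁ n R) (A₂ : Matrix m₂ n R) :
    (fromRows A₁ A₂)ᴴ * fromRows A₁ A₂ = A₁ᴴ * A₁ + A₂ᴴ * A₂ := by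
  rw [conjTranspose_fromRows_eq_fromCols_conjTranspose, fromCols_mul_fromRows]

theorem Matrix.conjTranspose_mul_self_fromRows_sqrt_smul_one {m n 𝕜 : Type*} [RCLike 𝕜]
    [Fintype m] [Fintype n] [DecidableEq n] (A : Matrix m n 𝕜) {ξ : ℝ} (hξ : 0 ≤ ξ) :
    (fromRows A ((√ξ : 𝕜) • (1 : Matrix n n 𝕜)))ᴴ * fromRows A ((√ξ : 𝕜) • (1 : Matrix n n 𝕜)) =
      Aᴴ * A + (ξ : 𝕜) • 1 := by
  rw [conjTranspose_fromRows_mul_self, conjTranspose_smul, conjTranspose_one, smul_mul_smul_comm,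
    one_mul, RCLike.star_def, RCLike.conj_ofReal, ← RCLike.ofReal_mul, Real.mul_self_sqrt hξ]

theorem Matrix.IsHermitian.toEuclideanLin_add_smul_one_eigenvectorBasis {𝕜 n : Type*} [RCLike 𝕜]
    [Fintype n] [DecidableEq n] {A : Matrix n n 𝕜} (hA : A.IsHermitian) (c : ℝ) (i : n) :
    toEuclideanLin (A + (c : 𝕜) • 1) (hA.eigenvectorBasis i) =
      ((hA.eigenvalues i + c : ℝ) : 𝕜) • hA.eigenvectorBasis i := by
  rw [toLpLin_apply, add_mulVec, hA.mulVec_eigenvectorBasis, smul_mulVec, one_mulVec,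
    RCLike.ofReal_add, add_smul, RCLike.real_smul_eq_coe_smul (K := 𝕜)]
  rfl

theorem EuclideanSpace.norm_sq_eq_sum_normSq {n : Type*} [Fintype n] (x : EuclideanSpace ℂ n) :
    ‖x‖ ^ 2 = ∑ i, Complex.normSq (x i) := by
  simp [EuclideanSpace.norm_sq_eq, Complex.normSq_eq_norm_sq]

theorem Matrix.setOf_normSq_div_eq_image_gainQuotients {m n : Type*} [Fintype m] [Fintype n]
    [DecidableEq m] [DecidableEq n] (B : Matrix m n ℂ) (c : ℝ) :
    {r : ℝ | ∃ x ∈ Set.range B.mulVec, x ≠ 0 ∧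
        r = (∑ k, Complex.normSq (Bᴴ.mulVec x k)) / (c * ∑ i, Complex.normSq (x i))} =
      (· / c) '' gainQuotients (toEuclideanLin B).adjoint (LinearMap.range (toEuclideanLin B)) := by
  ext r
  simp only [gainQuotients, ← toEuclideanLin_conjTranspose_eq_adjoint, Set.mem_image,
    Set.mem_ofPred_eq, Set.mem_range, LinearMap.mem_range]
  constructor
  · rintro ⟨_, ⟨v, rfl⟩, hx, rfl⟩
    refine ⟨_, ⟨toEuclideanLin B (WithLp.toLp 2 v), ⟨_, rfl⟩, ?_, rfl⟩, ?_⟩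
    · simpa using hx
    · simp [EuclideanSpace.norm_sq_eq_sum_normSq, div_mul_eq_div_div_swap]
  · rintro ⟨_, ⟨_, ⟨v, rfl⟩, hx, rfl⟩, rfl⟩
    refine ⟨B *ᵥ WithLp.ofLp v, ⟨_, rfl⟩, ?_, ?_⟩
    · simpa [toLpLin_apply] using hx
    · simp [EuclideanSpace.norm_sq_eq_sum_normSq, div_mul_eq_div_div_swap]

/-- Gain formula for the consistent underdetermined system: for `ξ ≥ 0`
and `B = [Q; √ξ I_K]` with full column rank, the minimum gain of `Bᴴ` over the
subspace `X = range(B)` equals `(λ_min(Qᴴ Q) + ξ)/(‖Q‖_F² + K ξ)`. -/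
theorem gain_formula_underdetermined {M K : ℕ}
    (Q : Matrix (Fin M) (Fin K) ℂ) (ξ : ℝ) (hξ : 0 ≤ ξ) :
    let B : Matrix (Fin M ⊕ Fin K) (Fin K) ℂ :=
      Matrix.fromRows Q (((Real.sqrt ξ : ℝ) : ℂ) • (1 : Matrix (Fin K) (Fin K) ℂ))
    let F2 : ℝ := ∑ i, ∑ j, Complex.normSq (Q i j)
    let lmin : ℝ := ⨅ i, (Matrix.isHermitian_conjTranspose_mul_self Q).eigenvalues i
    Function.Injective B.mulVec →
      sInf {r : ℝ | ∃ x ∈ Set.range B.mulVec, x ≠ 0 ∧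
          r = (∑ k, Complex.normSq (Bᴴ.mulVec x k)) /
            ((F2 + K * ξ) * ∑ i, Complex.normSq (x i))}
        = (lmin + ξ) / (F2 + K * ξ) := by
  intro B F2 lmin hB
  rw [B.setOf_normSq_div_eq_image_gainQuotients]
  obtain rfl | hK := K.eq_zero_or_pos
  · -- both sides are `0`: `sInf ∅ = 0` on the left and division by `F2 + 0 * ξ = 0` on the right
    simp [F2, gainQuotients, Subsingleton.elim (toEuclideanLin B) 0]
  have : Nonempty (Fin K) := Fin.pos_iff_nonempty.mp hK
  set hA := isHermitian_conjTranspose_mul_self Q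
  obtain ⟨i₀, hi₀⟩ := exists_eq_ciInf_of_finite (f := hA.eigenvalues)
  have hBB : Bᴴ * B = Qᴴ * Q + (ξ : ℂ) • 1 := conjTranspose_mul_self_fromRows_sqrt_smul_one Q hξ
  have hb : ∀ i, ((toEuclideanLin B).adjoint ∘ₗ toEuclideanLin B) (hA.eigenvectorBasis i) =
      ((hA.eigenvalues i + ξ : ℝ) : ℂ) • hA.eigenvectorBasis i := fun i => by
    rw [← toEuclideanLin_conjTranspose_eq_adjoint, ← toLpLin_mul_same, hBB]
    exact hA.toEuclideanLin_add_smul_one_eigenvectorBasis ξ i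
  have hinj : Function.Injective (toEuclideanLin B) := fun x y h =>
    WithLp.ofLp_injective 2 (hB (congrArg WithLp.ofLp h))
  have hleast := LinearMap.isLeast_gainQuotients_adjoint hinj hA.eigenvectorBasis hb (i₀ := i₀)
    fun i => by rw [hi₀]; exact add_le_add_left (ciInf_le (Set.finite_range _).bddBelow i) ξ
  have hc : 0 ≤ F2 + K * ξ := add_nonneg
    (Finset.sum_nonneg fun i _ => Finset.sum_nonneg fun j _ => Complex.normSq_nonneg _)
    (by positivity)
  have hmono : Monotone (· / (F2 + K * ξ)) := fun _ _ h => div_le_div_of_nonneg_right h hc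
  rw [show lmin = hA.eigenvalues i₀ from hi₀.symm]
  exact (hmono.map_isLeast hleast).csInf_eq
end
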